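/- arXiv:2403.02963 — 3 statements merged into one kernel-verified Lean document; each statement's English description precedes it below -/
import Mathlib

section
/- Let μ ∈ ℝ, σ > 0, Γ̄ > 0, λ > 0, ρ > 0, and set Υ = 1/(2σ²) + Γ̄/(ρλ). Then ∫_0^∞ (1/λ) exp(−x/λ) · exp(−(√(ρx/Γ̄) − μ)²/(2σ²)) dx = (Γ̄/(ρλΥ)) · [ exp(−μ²/(2σ²)) + (μ√π/(σ²√Υ)) · exp(−μ²Γ̄/(2σ²ρλΥ)) · Q(−μ√2/(2σ²√Υ)) ], where Q is the Gaussian Q-function. -/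
/-!
Substituting `x = (Γ / ρ) t²` turns the integral into a multiple of
`∫₀^∞ t e^{-a t²} e^{-(t - μ)² / (2σ²)} dt` with `a = Γ / (ρ λ)`. Completing the square,
the integrand is `e^K · t e^{-Υ (t - c)²}` with `c = μ / (2σ²Υ)`; after the shift `s = t - c`
this is `∫_{-c}^∞ (s + c) e^{-Υ s²} ds`, whose first half is elementary and whose second half
is a Gaussian tail, i.e. a value of `Q`.
-/

open MeasureTheory Real

/-- The Gaussian Q-function. -/
noncomputable def gaussQ (x : ℝ) : ℝ :=
  (1 / Real.sqrt (2 * Real.pi)) * ∫ u in Set.Ioi x, Real.exp (-u ^ 2 / 2)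

open Set Filter Topology

section ChangeOfVariables

variable {E : Type*} [NormedAddCommGroup E] [NormedSpace ℝ E]

lemma integral_Ioi_comp_add_right (g : ℝ → E) (a c : ℝ) :
    ∫ x in Ioi a, g (x + c) = ∫ x in Ioi (a + c), g x := by
  simpa [MeasurableEquiv.addRight, preimage_add_const_Ioi] using
    (measurePreserving_add_right volume c).setIntegral_preimage_emb
      (MeasurableEquiv.addRight c).measurableEmbedding g (Ioi (a + c))

lemma integral_Ioi_comp_const_mul_sq (g : ℝ → E) {k : ℝ} (hk : 0 < k) :
    ∫ t in Ioi 0, (2 * k * t) • g (k * t ^ 2) = ∫ x in Ioi 0, g x := by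
  have hscale := integral_comp_mul_left_Ioi' g 0 hk
  rw [mul_zero] at hscale
  rw [← hscale, ← integral_comp_rpow_Ioi_of_pos (g := fun y => g (k * y)) two_pos,
    ← integral_smul]
  refine setIntegral_congr_fun measurableSet_Ioi fun t _ => ?_
  rw [smul_smul, rpow_two, show (2 : ℝ) - 1 = 1 by norm_num, rpow_one]
  congr 1
  ring

end ChangeOfVariables

section GaussianTail

variable {b : ℝ} (hb : 0 < b)
include hb

lemma integral_Ioi_mul_exp_neg_mul_sq (a : ℝ) :
    ∫ t in Ioi a, t * exp (-b * t ^ 2) = exp (-b * a ^ 2) / (2 * b) := by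
  have hderiv (t : ℝ) : HasDerivAt (fun t => exp (-b * t ^ 2) / -(2 * b))
      (t * exp (-b * t ^ 2)) t := by
    have hquad : HasDerivAt (fun t : ℝ => -b * t ^ 2) (-b * (2 * t)) t := by
      simpa using (hasDerivAt_pow 2 t).const_mul (-b)
    have hanti : HasDerivAt (fun t => exp (-b * t ^ 2) / -(2 * b))
        (exp (-b * t ^ 2) * (-b * (2 * t)) / -(2 * b)) t := hquad.exp.div_const _
    convert hanti using 1
    field_simp
  have hlim : Tendsto (fun t => exp (-b * t ^ 2) / -(2 * b)) atTop (𝓝 0) := by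
    have := (tendsto_exp_atBot.comp <| tendsto_neg_atTop_atBot.comp <|
      (tendsto_pow_atTop two_ne_zero).const_mul_atTop hb).div_const (-(2 * b))
    simpa [Function.comp_def, neg_mul] using this
  rw [integral_Ioi_of_hasDerivAt_of_tendsto' (fun t _ => hderiv t)
    (integrable_mul_exp_neg_mul_sq hb).integrableOn hlim]
  ring

lemma integral_Ioi_exp_neg_mul_sq (a : ℝ) :
    ∫ t in Ioi a, exp (-b * t ^ 2) = √(π / b) * gaussQ (√(2 * b) * a) := by
  have hscale : 0 < √(2 * b) := by positivity
  have hpt (t : ℝ) : exp (-b * t ^ 2) = exp (-(√(2 * b) * t) ^ 2 / 2) := by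
    rw [mul_pow, sq_sqrt (by positivity)]
    ring_nf
  have hconst : (√(2 * b))⁻¹ = √(π / b) * (1 / √(2 * π)) := by
    rw [one_div, ← sqrt_inv, ← sqrt_inv, ← sqrt_mul (by positivity)]
    congr 1
    field_simp
  simp_rw [hpt]
  rw [integral_comp_mul_left_Ioi (fun u => exp (-u ^ 2 / 2)) a hscale, smul_eq_mul, hconst,
    gaussQ]
  ring

lemma integral_Ioi_add_mul_exp_neg_mul_sq (a c : ℝ) :
    ∫ t in Ioi a, (t + c) * exp (-b * t ^ 2)
      = exp (-b * a ^ 2) / (2 * b) + c * √(π / b) * gaussQ (√(2 * b) * a) := by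
  simp_rw [add_mul]
  rw [integral_add (integrable_mul_exp_neg_mul_sq hb).integrableOn
      ((integrable_exp_neg_mul_sq hb).integrableOn.const_mul c),
    integral_const_mul, integral_Ioi_mul_exp_neg_mul_sq hb, integral_Ioi_exp_neg_mul_sq hb,
    mul_assoc]

lemma integral_Ioi_zero_mul_exp_neg_mul_sq_sub (c : ℝ) :
    ∫ t in Ioi 0, t * exp (-b * (t - c) ^ 2)
      = exp (-b * c ^ 2) / (2 * b) + c * √(π / b) * gaussQ (-(√(2 * b) * c)) := by
  have := integral_Ioi_comp_add_right (fun s => (s + c) * exp (-b * s ^ 2)) 0 (-c)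
  simp only [← sub_eq_add_neg, sub_add_cancel, zero_sub] at this
  rw [this, integral_Ioi_add_mul_exp_neg_mul_sq hb, neg_sq, mul_neg]

end GaussianTail

lemma exp_neg_mul_sq_mul_exp_neg_sq_sub_div {a σ Υ : ℝ} (hσ : σ ≠ 0) (hΥ : Υ ≠ 0)
    (hΥdef : Υ = 1 / (2 * σ ^ 2) + a) (μ t : ℝ) :
    exp (-a * t ^ 2) * exp (-(t - μ) ^ 2 / (2 * σ ^ 2))
      = exp (-μ ^ 2 * a / (2 * σ ^ 2 * Υ)) * exp (-Υ * (t - μ / (2 * σ ^ 2 * Υ)) ^ 2) := by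
  rw [← exp_add, ← exp_add]
  congr 1
  obtain rfl : a = Υ - 1 / (2 * σ ^ 2) := by linarith
  field_simp
  ring

lemma integral_Ioi_mul_exp_neg_mul_sq_mul_exp_neg_sq_sub_div {a σ Υ : ℝ} (hσ : σ ≠ 0)
    (hΥ : 0 < Υ) (hΥdef : Υ = 1 / (2 * σ ^ 2) + a) (μ : ℝ) :
    ∫ t in Ioi 0, t * exp (-a * t ^ 2) * exp (-(t - μ) ^ 2 / (2 * σ ^ 2))
      = 1 / (2 * Υ) * (exp (-μ ^ 2 / (2 * σ ^ 2))
          + μ * √π / (σ ^ 2 * √Υ) * exp (-μ ^ 2 * a / (2 * σ ^ 2 * Υ))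
            * gaussQ (-(μ * √2) / (2 * σ ^ 2 * √Υ))) := by
  have hpt (t : ℝ) : t * exp (-a * t ^ 2) * exp (-(t - μ) ^ 2 / (2 * σ ^ 2))
      = exp (-μ ^ 2 * a / (2 * σ ^ 2 * Υ))
        * (t * exp (-Υ * (t - μ / (2 * σ ^ 2 * Υ)) ^ 2)) := by
    rw [mul_assoc, exp_neg_mul_sq_mul_exp_neg_sq_sub_div hσ hΥ.ne' hΥdef]
    ring
  have hexp : exp (-μ ^ 2 * a / (2 * σ ^ 2 * Υ)) * exp (-Υ * (μ / (2 * σ ^ 2 * Υ)) ^ 2)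
      = exp (-μ ^ 2 / (2 * σ ^ 2)) := by
    simpa using (exp_neg_mul_sq_mul_exp_neg_sq_sub_div hσ hΥ.ne' hΥdef μ 0).symm
  simp_rw [hpt]
  rw [integral_const_mul, integral_Ioi_zero_mul_exp_neg_mul_sq_sub hΥ, mul_add, ← mul_div_assoc,
    hexp]
  obtain ⟨r, hr, rfl⟩ : ∃ r, 0 < r ∧ Υ = r ^ 2 := ⟨√Υ, sqrt_pos.2 hΥ, (sq_sqrt hΥ.le).symm⟩
  rw [sqrt_div' _ (sq_nonneg r), sqrt_mul zero_le_two, sqrt_sq hr.le]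
  field_simp

theorem stmt_5 (μ σ Γ lam ρ : ℝ) (hσ : 0 < σ) (hΓ : 0 < Γ) (hlam : 0 < lam) (hρ : 0 < ρ)
    (Υ : ℝ) (hΥ : Υ = 1 / (2 * σ ^ 2) + Γ / (ρ * lam)) :
    ∫ x in Set.Ioi (0 : ℝ),
        (1 / lam) * Real.exp (-x / lam) *
          Real.exp (-(Real.sqrt (ρ * x / Γ) - μ) ^ 2 / (2 * σ ^ 2))
      = (Γ / (ρ * lam * Υ)) *
          (Real.exp (-μ ^ 2 / (2 * σ ^ 2))
            + (μ * Real.sqrt Real.pi / (σ ^ 2 * Real.sqrt Υ)) *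
                Real.exp (-μ ^ 2 * Γ / (2 * σ ^ 2 * ρ * lam * Υ)) *
                gaussQ (-(μ * Real.sqrt 2) / (2 * σ ^ 2 * Real.sqrt Υ))) := by
  have hΥpos : 0 < Υ := by rw [hΥ]; positivity
  rw [← integral_Ioi_comp_const_mul_sq _ (div_pos hΓ hρ)]
  have hpt : ∀ t ∈ Ioi (0 : ℝ), (2 * (Γ / ρ) * t) • (1 / lam * exp (-(Γ / ρ * t ^ 2) / lam)
        * exp (-(√(ρ * (Γ / ρ * t ^ 2) / Γ) - μ) ^ 2 / (2 * σ ^ 2)))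
      = 2 * (Γ / (ρ * lam)) * (t * exp (-(Γ / (ρ * lam)) * t ^ 2)
        * exp (-(t - μ) ^ 2 / (2 * σ ^ 2))) := by
    intro t ht
    rw [show ρ * (Γ / ρ * t ^ 2) / Γ = t ^ 2 by field_simp, sqrt_sq (le_of_lt ht), smul_eq_mul]
    ring_nf
  rw [setIntegral_congr_fun measurableSet_Ioi hpt, integral_const_mul,
    integral_Ioi_mul_exp_neg_mul_sq_mul_exp_neg_sq_sub_div hσ.ne' hΥpos hΥ]
  field_simp
end

section
/- Let μ > 0, σ > 0, Γ̄ > 0, λ > 0, ρ > 0, and Υ = 1/(2σ²) + Γ̄/(ρλ). Then ∫_{μ²Γ̄/ρ}^∞ (1/λ) exp(−x/λ) · exp(−(√(ρx/Γ̄) − μ)²/(2σ²)) dx = (Γ̄/(ρλΥ)) · [ exp(−μ²Γ̄/(ρλ)) + (μ√π/(σ²√Υ)) · exp(−μ²Γ̄/(2σ²ρλΥ)) · Q(√2·μΓ̄/(ρλ√Υ)) ]. -/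
open MeasureTheory Real

open Set Filter Topology

theorem integral_Ioi_comp_sub_right {E : Type*} [NormedAddCommGroup E] [NormedSpace ℝ E]
    (g : ℝ → E) (a m : ℝ) : ∫ x in Ioi a, g (x - m) = ∫ x in Ioi (a - m), g x := by
  rw [← integral_indicator measurableSet_Ioi, ← integral_indicator measurableSet_Ioi,
    ← integral_sub_right_eq_self ((Ioi (a - m)).indicator g) m]
  congr 1 with x
  simp only [indicator, mem_Ioi, sub_lt_sub_iff_right]

theorem integral_Ioi_comp_const_mul_sq_s6 {E : Type*} [NormedAddCommGroup E] [NormedSpace ℝ E]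
    {c a : ℝ} (hc : 0 < c) (ha : 0 ≤ a) (f : ℝ → E) :
    ∫ x in Ioi (c * a ^ 2), f x = ∫ y in Ioi a, (2 * c * y) • f (c * y ^ 2) := by
  have hmono : StrictMonoOn (fun y => c * y ^ 2) (Ici a) := fun x hx y _ hxy => by
    have : 0 ≤ x := ha.trans hx
    dsimp only; gcongr
  have himage : (fun y => c * y ^ 2) '' Ioi a = Ioi (c * a ^ 2) :=
    (by fun_prop : Continuous fun y => c * y ^ 2).continuousOn.image_Ioi_of_strictMonoOn hmono
      ((tendsto_pow_atTop two_ne_zero).const_mul_atTop hc)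
  rw [← himage, integral_image_eq_integral_abs_deriv_smul measurableSet_Ioi
    (fun y _ => ((hasDerivAt_pow 2 y).const_mul c).hasDerivWithinAt)
    (hmono.injOn.mono Ioi_subset_Ici_self)]
  refine setIntegral_congr_fun measurableSet_Ioi fun y hy => ?_
  have : 0 < y := ha.trans_lt hy
  rw [abs_of_pos (by positivity)]
  congr 1
  ring

theorem integral_Ioi_exp_neg_sq_div_two (z : ℝ) :
    ∫ u in Ioi z, exp (-u ^ 2 / 2) = √(2 * π) * gaussQ z := by
  rw [gaussQ, ← mul_assoc, mul_one_div_cancel (by positivity), one_mul]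

theorem integral_Ioi_exp_neg_mul_sq_sub {b : ℝ} (hb : 0 < b) (a m : ℝ) :
    ∫ y in Ioi a, exp (-b * (y - m) ^ 2) = √π / √b * gaussQ (√(2 * b) * (a - m)) := by
  have hs : 0 < √(2 * b) := by positivity
  have hsq : √(2 * b) ^ 2 = 2 * b := sq_sqrt (by positivity)
  have hconst : (√(2 * b))⁻¹ * √(2 * π) = √π / √b := by
    rw [sqrt_mul zero_le_two, sqrt_mul zero_le_two]
    field_simp
  calc ∫ y in Ioi a, exp (-b * (y - m) ^ 2)
      = ∫ y in Ioi (a - m), exp (-(√(2 * b) * y) ^ 2 / 2) := by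
        rw [integral_Ioi_comp_sub_right (fun y => exp (-b * y ^ 2))]
        congr 1 with y
        rw [mul_pow, hsq]
        congr 1
        ring
    _ = (√(2 * b))⁻¹ * (√(2 * π) * gaussQ (√(2 * b) * (a - m))) := by
        rw [integral_comp_mul_left_Ioi (fun u => exp (-u ^ 2 / 2)) _ hs,
          integral_Ioi_exp_neg_sq_div_two, smul_eq_mul]
    _ = √π / √b * gaussQ (√(2 * b) * (a - m)) := by
        rw [← mul_assoc, hconst]

theorem integral_Ioi_sub_mul_exp_neg_mul_sq_sub {b : ℝ} (hb : 0 < b) (a m : ℝ) :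
    ∫ y in Ioi a, (y - m) * exp (-b * (y - m) ^ 2) = exp (-b * (a - m) ^ 2) / (2 * b) := by
  have hderiv : ∀ y, HasDerivAt (fun y => -(exp (-b * y ^ 2) / (2 * b)))
      (y * exp (-b * y ^ 2)) y := fun y =>
    (((hasDerivAt_pow 2 y).const_mul (-b)).exp.div_const (2 * b)).neg.congr_deriv
      (by field_simp; ring)
  have hlim : Tendsto (fun y => -(exp (-b * y ^ 2) / (2 * b))) atTop (𝓝 0) := by
    have h := ((tendsto_exp_atBot.comp
      ((tendsto_pow_atTop two_ne_zero).const_mul_atTop_of_neg (neg_neg_of_pos hb))).neg.div_const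
      (2 * b))
    simpa [Function.comp_def, neg_div] using h
  rw [integral_Ioi_comp_sub_right (fun y => y * exp (-b * y ^ 2)),
    integral_Ioi_of_hasDerivAt_of_tendsto' (fun y _ => hderiv y)
      (integrable_mul_exp_neg_mul_sq hb).integrableOn hlim]
  ring

theorem integral_Ioi_mul_exp_neg_mul_sq_sub {b : ℝ} (hb : 0 < b) (a m : ℝ) :
    ∫ y in Ioi a, y * exp (-b * (y - m) ^ 2)
      = exp (-b * (a - m) ^ 2) / (2 * b) + m * (√π / √b) * gaussQ (√(2 * b) * (a - m)) := by
  have hint : Integrable (fun y => exp (-b * (y - m) ^ 2)) :=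
    (integrable_exp_neg_mul_sq hb).comp_sub_right m
  have hint' : Integrable (fun y => (y - m) * exp (-b * (y - m) ^ 2)) :=
    (integrable_mul_exp_neg_mul_sq hb).comp_sub_right m
  calc ∫ y in Ioi a, y * exp (-b * (y - m) ^ 2)
      = ∫ y in Ioi a, ((y - m) * exp (-b * (y - m) ^ 2) + m * exp (-b * (y - m) ^ 2)) := by
        congr 1 with y; ring
    _ = _ := by
        rw [integral_add hint'.integrableOn (hint.const_mul m).integrableOn, integral_const_mul,
          integral_Ioi_sub_mul_exp_neg_mul_sq_sub hb, integral_Ioi_exp_neg_mul_sq_sub hb, mul_assoc]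

theorem stmt_6 (μ σ Γ lam ρ : ℝ) (hμ : 0 < μ) (hσ : 0 < σ) (hΓ : 0 < Γ)
    (hlam : 0 < lam) (hρ : 0 < ρ)
    (Υ : ℝ) (hΥ : Υ = 1 / (2 * σ ^ 2) + Γ / (ρ * lam)) :
    ∫ x in Set.Ioi (μ ^ 2 * Γ / ρ),
        (1 / lam) * Real.exp (-x / lam) *
          Real.exp (-(Real.sqrt (ρ * x / Γ) - μ) ^ 2 / (2 * σ ^ 2))
      = (Γ / (ρ * lam * Υ)) *
          (Real.exp (-μ ^ 2 * Γ / (ρ * lam))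
            + (μ * Real.sqrt Real.pi / (σ ^ 2 * Real.sqrt Υ)) *
                Real.exp (-μ ^ 2 * Γ / (2 * σ ^ 2 * ρ * lam * Υ)) *
                gaussQ (Real.sqrt 2 * μ * Γ / (ρ * lam * Real.sqrt Υ))) := by
  have hΥpos : 0 < Υ := by rw [hΥ]; positivity
  set m := μ / (2 * σ ^ 2 * Υ) with hm
  set K := -μ ^ 2 * Γ / (2 * σ ^ 2 * ρ * lam * Υ) with hK
  have hcomplete (y : ℝ) :
      -(Γ / ρ * y ^ 2) / lam + -(y - μ) ^ 2 / (2 * σ ^ 2) = -Υ * (y - m) ^ 2 + K := by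
    rw [hm, hK, hΥ]; field_simp; ring
  have hintegrand : EqOn
      (fun y => (2 * (Γ / ρ) * y) • (1 / lam * exp (-(Γ / ρ * y ^ 2) / lam) *
        exp (-(√(ρ * (Γ / ρ * y ^ 2) / Γ) - μ) ^ 2 / (2 * σ ^ 2))))
      (fun y => 2 * Γ / (ρ * lam) * exp K * (y * exp (-Υ * (y - m) ^ 2))) (Ioi μ) := by
    intro y hy
    have hsqrt : √(ρ * (Γ / ρ * y ^ 2) / Γ) = y := by
      rw [show ρ * (Γ / ρ * y ^ 2) / Γ = y ^ 2 by field_simp]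
      exact sqrt_sq (hμ.trans hy).le
    simp only [smul_eq_mul, hsqrt]
    rw [mul_assoc (1 / lam), ← exp_add, hcomplete, exp_add]
    ring
  rw [show μ ^ 2 * Γ / ρ = Γ / ρ * μ ^ 2 by ring,
    integral_Ioi_comp_const_mul_sq_s6 (by positivity) hμ.le,
    setIntegral_congr_fun measurableSet_Ioi hintegrand, integral_const_mul,
    integral_Ioi_mul_exp_neg_mul_sq_sub hΥpos]
  have hμm : μ - m = μ * Γ / (ρ * lam * Υ) := by rw [hm, hΥ]; field_simp; ring
  have hQarg : √(2 * Υ) * (μ - m) = √2 * μ * Γ / (ρ * lam * √Υ) := by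
    have := mul_self_sqrt hΥpos.le
    rw [sqrt_mul zero_le_two, hμm]
    field_simp
    linear_combination this
  have hexp : exp K * exp (-Υ * (μ - m) ^ 2) = exp (-μ ^ 2 * Γ / (ρ * lam)) := by
    rw [← exp_add, hK, hμm, hΥ]; congr 1; field_simp; ring
  have hm2 : 2 * Υ * m = μ / σ ^ 2 := by rw [hm]; field_simp
  rw [hQarg]
  calc _ = Γ / (ρ * lam * Υ) * (exp K * exp (-Υ * (μ - m) ^ 2)
          + 2 * Υ * m * √π / √Υ * exp K * gaussQ (√2 * μ * Γ / (ρ * lam * √Υ))) := by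
        field_simp
    _ = _ := by rw [hexp, hm2]; ring
end

section
/- Let F(x) = 1 − ξ·Q((√(x/Γ̄) − μ)/σ) for x ≥ 0, with μ, σ, Γ̄ > 0 and ξ = 1/Q(−μ/σ), and let X have CDF F. Let Z be an independent random variable that is the maximum of L i.i.d. exponentials with mean λ. Then P[(1+X)/(1+Z) < ρ] = 1 − ∑_{m=1}^{1}∑_{l=1}^{L} (−1)^{1+l} (L choose l) ξ ∫_0^∞ Q((√((ρ−1+ρx)/Γ̄) − μ)/σ) · (l/λ) exp(−lx/λ) dx; that is, the secrecy outage probability equals 1 − ξ ∑_{l=1}^{L} (−1)^{l+1} (L choose l) ∫_0^∞ Q((√((ρ−1+ρx)/Γ̄) − μ)/σ) (l/λ) e^{−lx/λ} dx. -/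
/-
Conditioning on the strongest eavesdropper SNR `W = max_l Z_l`, independence turns the outage
probability into `E[F(ρ - 1 + ρ W)]`, where `F` is the CDF of `X`; since `F` is continuous,
`X` has no atoms and the strict inequality in the event is harmless. The law of `W` has CDF
`(1 - e^{-w/λ})^L`; expanding it binomially and differentiating shows that its density is the
alternating sum `∑_l (-1)^(l+1) (L choose l) (l/λ) e^{-lw/λ}`, and integrating
`F(ρ - 1 + ρ w)` against it term by term gives the formula.
-/

open MeasureTheory ProbabilityTheory Real Finset

open Filter Topology Set

lemma integrable_exp_neg_sq_div_two : Integrable fun u : ℝ => exp (-u ^ 2 / 2) := by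
  simpa [div_eq_inv_mul, mul_comm] using
    integrable_exp_neg_mul_sq (by norm_num : (0 : ℝ) < 1 / 2)

lemma gaussQ_nonneg (x : ℝ) : 0 ≤ gaussQ x :=
  mul_nonneg (by positivity) (setIntegral_nonneg measurableSet_Ioi fun u _ => (exp_pos _).le)

lemma gaussQ_pos (x : ℝ) : 0 < gaussQ x := by
  refine mul_pos (by positivity) ?_
  rw [setIntegral_pos_iff_support_of_nonneg_ae (ae_of_all _ fun u => (exp_pos _).le)
    integrable_exp_neg_sq_div_two.integrableOn]
  simp [Function.support, (exp_pos _).ne']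

lemma gaussQ_le_one (x : ℝ) : gaussQ x ≤ 1 := by
  have htotal : ∫ u : ℝ, exp (-u ^ 2 / 2) = √(2 * π) := by
    simpa [div_eq_inv_mul, mul_comm] using integral_gaussian (1 / 2)
  have hle : ∫ u in Ioi x, exp (-u ^ 2 / 2) ≤ √(2 * π) :=
    htotal ▸ setIntegral_le_integral integrable_exp_neg_sq_div_two
      (ae_of_all _ fun u => (exp_pos _).le)
  rw [gaussQ, one_div, inv_mul_le_iff₀ (by positivity), mul_one]
  exact hle

lemma abs_gaussQ_le_one (x : ℝ) : |gaussQ x| ≤ 1 :=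
  abs_le.2 ⟨by linarith [gaussQ_nonneg x], gaussQ_le_one x⟩

@[fun_prop]
lemma continuous_gaussQ : Continuous gaussQ := by
  refine continuous_const.mul (continuous_iff_continuousAt.2 fun x => ?_)
  exact (integrable_exp_neg_sq_div_two.integrableOn.continuousOn_Ici_primitive_Ioi
    (a₀ := x - 1)).continuousAt (Ici_mem_nhds (by linarith))

lemma measure_singleton_eq_zero_of_continuousAt_cdf {ν : Measure ℝ} [IsProbabilityMeasure ν]
    {t : ℝ} (h : ContinuousAt (cdf ν) t) : ν {t} = 0 := by
  rw [← measure_cdf ν, StieltjesFunction.measure_singleton, h.continuousWithinAt.leftLim_eq,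
    sub_self, ENNReal.ofReal_zero]

lemma measureReal_Iio_eq_of_cdf {ν : Measure ℝ} [IsProbabilityMeasure ν] {F : ℝ → ℝ}
    (hF : Continuous F) (hF0 : F 0 = 0) (hcdf : ∀ x, 0 ≤ x → ν.real (Iic x) = F x)
    {t : ℝ} (ht : 0 ≤ t) : ν.real (Iio t) = F t := by
  have hatom : ν {t} = 0 := by
    rcases ht.eq_or_lt with rfl | ht
    · refine measure_mono_null (Set.singleton_subset_iff.2 (Set.mem_Iic.2 le_rfl)) ?_
      rw [← ofReal_measureReal, hcdf 0 le_rfl, hF0, ENNReal.ofReal_zero]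
    · refine measure_singleton_eq_zero_of_continuousAt_cdf (hF.continuousAt.congr ?_)
      filter_upwards [lt_mem_nhds ht] with x hx
      rw [cdf_eq_real, hcdf x hx.le]
  rw [measureReal_congr (Iio_ae_eq_Iic' hatom), hcdf t ht]

-- The CDF of `Γ Y²` for `Y ∼ N(μ, σ²)` conditioned on `Y ≥ 0`.
noncomputable def truncGaussSqCDF (μ σ Γ t : ℝ) : ℝ :=
  1 - (gaussQ (-μ / σ))⁻¹ * gaussQ ((√(t / Γ) - μ) / σ)

lemma continuous_truncGaussSqCDF (μ σ Γ : ℝ) : Continuous (truncGaussSqCDF μ σ Γ) := by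
  unfold truncGaussSqCDF
  fun_prop

lemma truncGaussSqCDF_zero (μ σ Γ : ℝ) : truncGaussSqCDF μ σ Γ 0 = 0 := by
  rw [truncGaussSqCDF, zero_div, Real.sqrt_zero, zero_sub, inv_mul_cancel₀ (gaussQ_pos _).ne',
    sub_self]

lemma exp_neg_div_le_one {x lam : ℝ} (hx : 0 ≤ x) (hlam : 0 < lam) : exp (-x / lam) ≤ 1 :=
  exp_le_one_iff.2 (div_nonpos_of_nonpos_of_nonneg (neg_nonpos.2 hx) hlam.le)

lemma one_add_div_one_add_lt_iff {x w ρ : ℝ} (hw : 0 ≤ w) :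
    (1 + x) / (1 + w) < ρ ↔ x < ρ - 1 + ρ * w := by
  rw [div_lt_iff₀ (by linarith)]
  constructor <;> intro h <;> linarith

namespace ProbabilityTheory

variable {Ω : Type*} {mΩ : MeasurableSpace Ω} {P : Measure Ω}

lemma measureReal_lt_comp_eq_integral [IsProbabilityMeasure P] {X W : Ω → ℝ}
    (hX : Measurable X) (hW : Measurable W) (hXW : IndepFun X W P) {h : ℝ → ℝ}
    (hh : Measurable h) :
    P.real {ω | X ω < h (W ω)} = ∫ w, (P.map X).real (Iio (h w)) ∂(P.map W) := by
  have hS : MeasurableSet {p : ℝ × ℝ | p.1 < h p.2} :=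
    measurableSet_lt measurable_fst (hh.comp measurable_snd)
  have hprod : P.map (fun ω => (X ω, W ω)) = (P.map X).prod (P.map W) :=
    (indepFun_iff_map_prod_eq_prod_map_map hX.aemeasurable hW.aemeasurable).1 hXW
  have hmono : Monotone fun t => P.map X (Iio t) := fun _ _ hst =>
    measure_mono (Iio_subset_Iio hst)
  change (P ((fun ω => (X ω, W ω)) ⁻¹' {p : ℝ × ℝ | p.1 < h p.2})).toReal = _
  rw [← Measure.map_apply (hX.prodMk hW) hS, hprod, Measure.prod_apply_symm hS]
  exact (integral_toReal (hmono.measurable.comp hh).aemeasurable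
    (ae_of_all _ fun _ => measure_lt_top _ _)).symm

lemma iIndepFun.measure_iSup_le {ι : Type*} [Fintype ι] [Nonempty ι] {Z : ι → Ω → ℝ}
    (h : iIndepFun Z P) (b : ℝ) :
    P {ω | ⨆ i, Z i ω ≤ b} = ∏ i, P {ω | Z i ω ≤ b} := by
  have hset : {ω | ⨆ i, Z i ω ≤ b} = ⋂ i, Z i ⁻¹' Iic b := by
    ext ω
    simp [ciSup_le_iff (finite_range fun i => Z i ω).bddAbove]
  rw [hset, h.meas_iInter fun i => ⟨Iic b, measurableSet_Iic, rfl⟩]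
  rfl

lemma iIndepFun.indepFun_iSup_of_sumElim {ι : Type*} [Fintype ι] {X : Ω → ℝ}
    {Z : ι → Ω → ℝ} (hX : Measurable X) (hZ : ∀ i, Measurable (Z i))
    (h : iIndepFun (Sum.elim (fun _ : Unit => X) Z) P) :
    IndepFun X (fun ω => ⨆ i, Z i ω) P := by
  classical
  have hmeas : ∀ j, Measurable (Sum.elim (fun _ : Unit => X) Z j) := by
    rintro (_ | i)
    exacts [hX, hZ i]
  let S : Finset (Unit ⊕ ι) := {Sum.inl ()}
  let T : Finset (Unit ⊕ ι) := univ.image Sum.inr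
  have hφ : Measurable fun v : S → ℝ => v ⟨Sum.inl (), by simp [S]⟩ :=
    measurable_pi_apply _
  have hψ : Measurable fun v : T → ℝ => ⨆ i, v ⟨Sum.inr i, by simp [T]⟩ :=
    Measurable.iSup fun i => measurable_pi_apply _
  exact (h.indepFun_finset S T (by simp [S, T]) hmeas).comp hφ hψ

end ProbabilityTheory

section MaxOfExponentials

variable (L : ℕ) {lam : ℝ}

noncomputable def maxExpDensity (L : ℕ) (lam x : ℝ) : ℝ :=
  ∑ l ∈ Icc 1 L, (-1 : ℝ) ^ (l + 1) * (L.choose l : ℝ) * ((l / lam) * exp (-l * x / lam))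

lemma one_sub_exp_pow_eq_sum (lam x : ℝ) :
    (1 - exp (-x / lam)) ^ L
      = ∑ l ∈ range (L + 1), (-1 : ℝ) ^ l * (L.choose l : ℝ) * exp (-l * x / lam) := by
  rw [sub_eq_neg_add, add_pow]
  refine sum_congr rfl fun l _ => ?_
  rw [one_pow, mul_one, neg_pow, ← exp_nat_mul]
  ring_nf

lemma hasDerivAt_one_sub_exp_pow (lam x : ℝ) :
    HasDerivAt (fun y => (1 - exp (-y / lam)) ^ L) (maxExpDensity L lam x) x := by
  simp_rw [one_sub_exp_pow_eq_sum]
  have hterm : ∀ l ∈ range (L + 1), HasDerivAt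
      (fun y => (-1 : ℝ) ^ l * (L.choose l : ℝ) * exp (-l * y / lam))
      ((-1 : ℝ) ^ l * (L.choose l : ℝ) * (exp (-l * x / lam) * (-l / lam))) x := by
    intro l _
    refine HasDerivAt.const_mul _ (HasDerivAt.exp ?_)
    simpa [mul_div_assoc, neg_div] using ((hasDerivAt_id x).const_mul (-(l : ℝ))).div_const lam
  refine (HasDerivAt.fun_sum hterm).congr_deriv ?_
  rw [maxExpDensity, ← sum_subset (fun l hl => mem_range.2 (Nat.lt_succ_of_le (mem_Icc.1 hl).2))]
  · exact sum_congr rfl fun l _ => by ring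
  · intro l hrange hl
    obtain rfl : l = 0 := by simp at hrange hl; omega
    simp

lemma maxExpDensity_nonneg (hlam : 0 < lam) {x : ℝ} (hx : 0 ≤ x) :
    0 ≤ maxExpDensity L lam x := by
  -- the chain rule gives a second, manifestly nonnegative, form of the same derivative
  have hchain : HasDerivAt (fun y => (1 - exp (-y / lam)) ^ L)
      (L * (1 - exp (-x / lam)) ^ (L - 1) * (exp (-x / lam) / lam)) x := by
    refine HasDerivAt.fun_pow ?_ L
    simpa [neg_div, div_eq_mul_inv] using ((hasDerivAt_id x).div_const lam).neg.exp.const_sub 1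
  have : 0 ≤ 1 - exp (-x / lam) := sub_nonneg.2 (exp_neg_div_le_one hx hlam)
  rw [(hasDerivAt_one_sub_exp_pow L lam x).unique hchain]
  positivity

lemma continuous_maxExpDensity (lam : ℝ) : Continuous (maxExpDensity L lam) := by
  unfold maxExpDensity
  fun_prop

lemma integral_maxExpDensity_Ioc (hL : L ≠ 0) {b : ℝ} (hb : 0 ≤ b) :
    ∫ x in Ioc 0 b, maxExpDensity L lam x = (1 - exp (-b / lam)) ^ L := by
  rw [← intervalIntegral.integral_of_le hb, intervalIntegral.integral_eq_sub_of_hasDerivAt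
    (fun x _ => hasDerivAt_one_sub_exp_pow L lam x)
    ((continuous_maxExpDensity L lam).intervalIntegrable 0 b)]
  simp [hL]

noncomputable def maxExpLaw (L : ℕ) (lam : ℝ) : Measure ℝ :=
  (volume.restrict (Ioi 0)).withDensity fun x => ENNReal.ofReal (maxExpDensity L lam x)

lemma maxExpLaw_Iic (hL : L ≠ 0) (hlam : 0 < lam) {b : ℝ} (hb : 0 ≤ b) :
    maxExpLaw L lam (Iic b) = ENNReal.ofReal ((1 - exp (-b / lam)) ^ L) := by
  rw [maxExpLaw, withDensity_apply _ measurableSet_Iic,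
    Measure.restrict_restrict measurableSet_Iic, inter_comm, Ioi_inter_Iic,
    ← integral_maxExpDensity_Ioc L hL hb,
    ofReal_integral_eq_lintegral_ofReal (continuous_maxExpDensity L lam).integrableOn_Ioc]
  filter_upwards [ae_restrict_mem measurableSet_Ioc] with x hx
  exact maxExpDensity_nonneg L hlam hx.1.le

lemma maxExpLaw_Iic_of_neg {b : ℝ} (hb : b < 0) : maxExpLaw L lam (Iic b) = 0 := by
  rw [maxExpLaw, withDensity_apply _ measurableSet_Iic,
    Measure.restrict_restrict measurableSet_Iic, inter_comm, Ioi_inter_Iic, Ioc_eq_empty hb.not_gt,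
    Measure.restrict_empty, lintegral_zero_measure]

lemma integrableOn_mul_exp_neg_mul_div (hlam : 0 < lam) {l : ℕ} (hl : l ≠ 0) :
    IntegrableOn (fun x => (l / lam) * exp (-l * x / lam)) (Ioi 0) := by
  have hrate : 0 < (l : ℝ) / lam := div_pos (Nat.cast_pos.2 (Nat.pos_of_ne_zero hl)) hlam
  refine IntegrableOn.congr_fun ((exp_neg_integrableOn_Ioi 0 hrate).const_mul (l / lam))
    (fun x _ => ?_) measurableSet_Ioi
  ring_nf

lemma integral_maxExpLaw (hlam : 0 < lam) {g : ℝ → ℝ} (hg : Measurable g) {C : ℝ}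
    (hC : ∀ x, |g x| ≤ C) :
    ∫ x, g x ∂maxExpLaw L lam = ∑ l ∈ Icc 1 L, (-1 : ℝ) ^ (l + 1) * (L.choose l : ℝ) *
      ∫ x in Ioi 0, g x * ((l / lam) * exp (-l * x / lam)) := by
  have hexpand : ∀ x ∈ Ioi (0 : ℝ), (ENNReal.ofReal (maxExpDensity L lam x)).toReal • g x
      = ∑ l ∈ Icc 1 L, (-1 : ℝ) ^ (l + 1) * (L.choose l : ℝ) *
          (g x * ((l / lam) * exp (-l * x / lam))) := by
    intro x hx
    rw [ENNReal.toReal_ofReal (maxExpDensity_nonneg L hlam (le_of_lt hx)), smul_eq_mul,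
      maxExpDensity, sum_mul]
    exact sum_congr rfl fun l _ => by ring
  rw [maxExpLaw, integral_withDensity_eq_integral_toReal_smul
      (continuous_maxExpDensity L lam).measurable.ennreal_ofReal
      (ae_of_all _ fun _ => ENNReal.ofReal_lt_top),
    setIntegral_congr_fun measurableSet_Ioi hexpand, integral_finsetSum]
  · exact sum_congr rfl fun l _ => integral_const_mul _ _
  · intro l hl
    refine Integrable.const_mul ?_ _
    exact (integrableOn_mul_exp_neg_mul_div hlam (by simp at hl; omega)).bdd_mul
      hg.aestronglyMeasurable (ae_of_all _ fun x => (Real.norm_eq_abs _).trans_le (hC x))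

variable {Ω : Type*} {mΩ : MeasurableSpace Ω} {P : Measure Ω}

lemma map_iSup_eq_maxExpLaw [IsProbabilityMeasure P] (hL : L ≠ 0) (hlam : 0 < lam)
    {Z : Fin L → Ω → ℝ} (hZ : ∀ l, Measurable (Z l)) (hZnn : ∀ l ω, 0 ≤ Z l ω)
    (h : iIndepFun Z P)
    (hZtail : ∀ l (x : ℝ), 0 ≤ x → P.real {ω | x < Z l ω} = exp (-x / lam)) :
    P.map (fun ω => ⨆ l, Z l ω) = maxExpLaw L lam := by
  have : Nonempty (Fin L) := ⟨⟨0, Nat.pos_of_ne_zero hL⟩⟩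
  refine Measure.ext_of_Iic _ _ fun b => ?_
  rw [Measure.map_apply (Measurable.iSup hZ) measurableSet_Iic]
  rcases lt_or_ge b 0 with hb | hb
  · have hempty : (fun ω => ⨆ l, Z l ω) ⁻¹' Iic b = ∅ :=
      eq_empty_of_forall_notMem fun ω hω => hb.not_ge ((Real.iSup_nonneg (hZnn · ω)).trans hω)
    rw [maxExpLaw_Iic_of_neg L hb, hempty, measure_empty]
  · have hcdf : ∀ l, P {ω | Z l ω ≤ b} = ENNReal.ofReal (1 - exp (-b / lam)) := by
      intro l
      rw [← ofReal_measureReal, show {ω | Z l ω ≤ b} = {ω | b < Z l ω}ᶜ by ext; simp,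
        probReal_compl_eq_one_sub (measurableSet_lt measurable_const (hZ l)), hZtail l b hb]
    rw [maxExpLaw_Iic L hL hlam hb,
      ENNReal.ofReal_pow (sub_nonneg.2 (exp_neg_div_le_one hb hlam))]
    change P {ω | ⨆ l, Z l ω ≤ b} = _
    rw [h.measure_iSup_le b, prod_congr rfl fun l _ => hcdf l, prod_const, card_univ,
      Fintype.card_fin]

end MaxOfExponentials

theorem stmt_17_general {Ω : Type*} [MeasureSpace Ω] [IsProbabilityMeasure (ℙ : Measure Ω)]
    (L : ℕ) (hL : 1 ≤ L) (μ σ Γ lam ρ : ℝ)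
    (hlam : 0 < lam) (hρ : 1 ≤ ρ)
    (X : Ω → ℝ) (Z : Fin L → Ω → ℝ)
    (hX : Measurable X) (hZ : ∀ l, Measurable (Z l))
    (hZnn : ∀ l ω, 0 ≤ Z l ω)
    (hindep : iIndepFun (Sum.elim (fun _ : Unit => X) Z) ℙ)
    (hXcdf : ∀ x : ℝ, 0 ≤ x →
      (ℙ {ω | X ω ≤ x}).toReal
        = 1 - (gaussQ (-μ / σ))⁻¹ * gaussQ ((Real.sqrt (x / Γ) - μ) / σ))
    (hZtail : ∀ l (x : ℝ), 0 ≤ x → (ℙ {ω | x < Z l ω}).toReal = Real.exp (-x / lam)) :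
    (ℙ {ω | (1 + X ω) / (1 + ⨆ l, Z l ω) < ρ}).toReal
      = 1 - (gaussQ (-μ / σ))⁻¹ *
          ∑ l ∈ Finset.Icc 1 L,
            (-1 : ℝ) ^ (l + 1) * (L.choose l : ℝ) *
              ∫ x in Set.Ioi (0 : ℝ),
                gaussQ ((Real.sqrt ((ρ - 1 + ρ * x) / Γ) - μ) / σ) *
                  (((l : ℝ) / lam) * Real.exp (-(l : ℝ) * x / lam)) := by
  set W : Ω → ℝ := fun ω => ⨆ l, Z l ω
  set g : ℝ → ℝ := fun w => gaussQ ((√((ρ - 1 + ρ * w) / Γ) - μ) / σ)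
  have hW : Measurable W := Measurable.iSup hZ
  have hWnn : ∀ ω, 0 ≤ W ω := fun ω => Real.iSup_nonneg (hZnn · ω)
  have : IsProbabilityMeasure (Measure.map X ℙ) :=
    Measure.isProbabilityMeasure_map hX.aemeasurable
  have : IsProbabilityMeasure (Measure.map W ℙ) :=
    Measure.isProbabilityMeasure_map hW.aemeasurable
  have hlawX (t : ℝ) (ht : 0 ≤ t) :
      (Measure.map X ℙ).real (Iio t) = truncGaussSqCDF μ σ Γ t :=
    measureReal_Iio_eq_of_cdf (continuous_truncGaussSqCDF μ σ Γ) (truncGaussSqCDF_zero μ σ Γ)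
      (fun x hx => (map_measureReal_apply hX measurableSet_Iic).trans (hXcdf x hx)) ht
  have hlawW : Measure.map W ℙ = maxExpLaw L lam := map_iSup_eq_maxExpLaw L (by omega) hlam hZ
    hZnn (hindep.precomp (g := Sum.inr) Sum.inr_injective) hZtail
  have hg : Continuous g := by fun_prop
  calc (ℙ {ω | (1 + X ω) / (1 + W ω) < ρ}).toReal
      = ∫ w, (Measure.map X ℙ).real (Iio (ρ - 1 + ρ * w)) ∂Measure.map W ℙ := by
        simp only [one_add_div_one_add_lt_iff (hWnn _)]
        exact measureReal_lt_comp_eq_integral hX hW (hindep.indepFun_iSup_of_sumElim hX hZ)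
          (h := fun w => ρ - 1 + ρ * w) (by fun_prop)
    _ = ∫ w, (1 - (gaussQ (-μ / σ))⁻¹ * g w) ∂Measure.map W ℙ := by
        refine integral_congr_ae ?_
        filter_upwards [(ae_map_iff hW.aemeasurable measurableSet_Ici).2 (ae_of_all _ hWnn)]
          with w (hw : 0 ≤ w)
        exact hlawX _ (by nlinarith)
    _ = 1 - (gaussQ (-μ / σ))⁻¹ * ∫ w, g w ∂maxExpLaw L lam := by
        rw [integral_sub (integrable_const 1) ((Integrable.of_bound hg.aestronglyMeasurable 1
            (ae_of_all _ fun w => abs_gaussQ_le_one _)).const_mul _),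
          integral_const_mul, integral_const, probReal_univ, hlawW, one_smul]
    _ = _ := by rw [integral_maxExpLaw L hlam hg.measurable fun w => abs_gaussQ_le_one _]

theorem stmt_17 {Ω : Type*} [MeasureSpace Ω] [IsProbabilityMeasure (ℙ : Measure Ω)]
    (L : ℕ) (hL : 1 ≤ L) (μ σ Γ lam ρ : ℝ)
    (hμ : 0 < μ) (hσ : 0 < σ) (hΓ : 0 < Γ) (hlam : 0 < lam) (hρ : 1 ≤ ρ)
    (X : Ω → ℝ) (Z : Fin L → Ω → ℝ)
    (hX : Measurable X) (hZ : ∀ l, Measurable (Z l))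
    (hXnn : ∀ ω, 0 ≤ X ω) (hZnn : ∀ l ω, 0 ≤ Z l ω)
    (hindep : iIndepFun (Sum.elim (fun _ : Unit => X) Z) ℙ)
    (hXcdf : ∀ x : ℝ, 0 ≤ x →
      (ℙ {ω | X ω ≤ x}).toReal
        = 1 - (gaussQ (-μ / σ))⁻¹ * gaussQ ((Real.sqrt (x / Γ) - μ) / σ))
    (hZtail : ∀ l (x : ℝ), 0 ≤ x → (ℙ {ω | x < Z l ω}).toReal = Real.exp (-x / lam)) :
    (ℙ {ω | (1 + X ω) / (1 + ⨆ l, Z l ω) < ρ}).toReal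
      = 1 - (gaussQ (-μ / σ))⁻¹ *
          ∑ l ∈ Finset.Icc 1 L,
            (-1 : ℝ) ^ (l + 1) * (L.choose l : ℝ) *
              ∫ x in Set.Ioi (0 : ℝ),
                gaussQ ((Real.sqrt ((ρ - 1 + ρ * x) / Γ) - μ) / σ) *
                  (((l : ℝ) / lam) * Real.exp (-(l : ℝ) * x / lam)) :=
  stmt_17_general L hL μ σ Γ lam ρ hlam hρ X Z hX hZ hZnn hindep hXcdf hZtail
end
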